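/- arXiv:2004.04324 — 4 statements merged into one kernel-verified Lean document; each statement's English description precedes it below -/
import Mathlib

section
/- Any subset S of the plane with finite diameter d is contained in a closed disk of radius (√3/2)·d. More precisely, if x, y ∈ S satisfy |x - y| = d and every z ∈ S satisfies |z - x| ≤ d and |z - y| ≤ d, then S is contained in the closed disk of radius (√3/2)·d centered at the midpoint of x and y. -/
/-!
With `u = z - x` and `v = z - y`, the point `z` lies at distance `‖u + v‖ / 2` from the midpoint
of `x` and `y`, while `u - v = y - x`. The parallelogram law gives
`‖u + v‖² = 2‖u‖² + 2‖v‖² - ‖u - v‖² ≤ 4d² - d² = 3d²`.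
-/

open Metric

section InnerProductSpace

variable {E : Type*} [NormedAddCommGroup E] [InnerProductSpace ℝ E]

theorem norm_add_le_sqrt_three_mul {u v : E} {d : ℝ} (hu : ‖u‖ ≤ d) (hv : ‖v‖ ≤ d)
    (huv : d ≤ ‖u - v‖) : ‖u + v‖ ≤ √3 * d := by
  have hd : 0 ≤ d := (norm_nonneg u).trans hu
  have hsq : ‖u + v‖ ^ 2 ≤ 3 * d ^ 2 := by
    nlinarith [parallelogram_law_with_norm ℝ u v, mul_self_le_mul_self (norm_nonneg u) hu,
      mul_self_le_mul_self (norm_nonneg v) hv, mul_self_le_mul_self hd huv]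
  calc ‖u + v‖ ≤ √(3 * d ^ 2) := Real.le_sqrt_of_sq_le hsq
    _ = √3 * d := by rw [Real.sqrt_mul zero_le_three, Real.sqrt_sq hd]

theorem dist_midpoint_le_sqrt_three_div_two_mul {x y z : E} {d : ℝ} (hx : dist z x ≤ d)
    (hy : dist z y ≤ d) (hxy : d ≤ dist x y) : dist z (midpoint ℝ x y) ≤ √3 / 2 * d := by
  rw [dist_eq_norm] at hx hy hxy ⊢
  have hmid : z - midpoint ℝ x y = (2 : ℝ)⁻¹ • ((z - x) + (z - y)) := by
    rw [midpoint_eq_smul_add, invOf_eq_inv]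
    module
  have := norm_add_le_sqrt_three_mul hx hy (by rwa [sub_sub_sub_cancel_left, norm_sub_rev])
  rw [hmid, norm_smul, Real.norm_of_nonneg (by norm_num)]
  linarith

end InnerProductSpace

theorem Complex.midpoint_eq_div_two (x y : ℂ) : midpoint ℝ x y = (x + y) / 2 := by
  rw [midpoint_eq_smul_add, invOf_eq_inv, Complex.real_smul]
  push_cast
  ring

theorem stmt_2_general (S : Set ℂ) (d : ℝ) (x y : ℂ)
    (hd : ‖x - y‖ = d)
    (h : ∀ z ∈ S, ‖z - x‖ ≤ d ∧ ‖z - y‖ ≤ d) :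
    S ⊆ Metric.closedBall ((x + y) / 2) (Real.sqrt 3 / 2 * d) := by
  intro z hz
  obtain ⟨hzx, hzy⟩ := h z hz
  rw [← dist_eq_norm] at hzx hzy hd
  rw [mem_closedBall, ← Complex.midpoint_eq_div_two]
  exact dist_midpoint_le_sqrt_three_div_two_mul hzx hzy hd.ge

theorem stmt_2 (S : Set ℂ) (d : ℝ) (x y : ℂ) (hx : x ∈ S) (hy : y ∈ S)
    (hd : ‖x - y‖ = d)
    (h : ∀ z ∈ S, ‖z - x‖ ≤ d ∧ ‖z - y‖ ≤ d) :
    S ⊆ Metric.closedBall ((x + y) / 2) (Real.sqrt 3 / 2 * d) :=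
  stmt_2_general S d x y hd h
end

section
/- Define sequences (R_n) and (r_n) by R_1 = √(2|c|), R_{n+1} = √(|c| + R_n), r_1 = 0, r_{n+1} = √(|c| - R_n), where c ∈ ℂ with |c| > 2. Then (R_n) is monotone decreasing and (r_n) is monotone increasing. -/
/-!
Both recursions are monotone in the previous term: `x ↦ √(a + x)` is increasing and
`x ↦ √(a - x)` is decreasing. So `R` is antitone as soon as `R₂ ≤ R₁`, which amounts to
`√(2a) ≤ a`, i.e. `a ≥ 2`; and `r_{n+2} = √(a - R_{n+1}) ≥ √(a - R_n) = r_{n+1}`.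
-/

noncomputable def Rseq (a : ℝ) : ℕ → ℝ
  | 0 => Real.sqrt (2 * a)
  | n + 1 => Real.sqrt (a + Rseq a n)

noncomputable def rseq (a : ℝ) : ℕ → ℝ
  | 0 => 0
  | n + 1 => Real.sqrt (a - Rseq a n)

lemma sqrt_two_mul_le_self {a : ℝ} (ha : 2 ≤ a) : Real.sqrt (2 * a) ≤ a :=
  Real.sqrt_le_iff.mpr ⟨by linarith, by nlinarith⟩

lemma Rseq_one_le_zero {a : ℝ} (ha : 2 ≤ a) : Rseq a 1 ≤ Rseq a 0 :=
  calc Real.sqrt (a + Real.sqrt (2 * a))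
      ≤ Real.sqrt (a + a) := Real.sqrt_le_sqrt (by linarith [sqrt_two_mul_le_self ha])
    _ = Real.sqrt (2 * a) := by rw [two_mul]

lemma Rseq_antitone {a : ℝ} (ha : 2 ≤ a) : Antitone (Rseq a) := by
  refine antitone_nat_of_succ_le fun n => ?_
  induction n with
  | zero => exact Rseq_one_le_zero ha
  | succ n ih => exact Real.sqrt_le_sqrt (by linarith)

lemma rseq_monotone_of_antitone {a : ℝ} (hR : Antitone (Rseq a)) : Monotone (rseq a) := by
  refine monotone_nat_of_le_succ fun n => ?_
  cases n with
  | zero => exact Real.sqrt_nonneg _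
  | succ n => exact Real.sqrt_le_sqrt (by linarith [hR n.le_succ])

/-- Here `Rseq a n` is `R_{n+1}` and `rseq a n` is `r_{n+1}` of the paper. -/
theorem stmt_6 (c : ℂ) (hc : 2 < ‖c‖) :
    Antitone (Rseq (‖c‖)) ∧ Monotone (rseq (‖c‖)) :=
  have hR := Rseq_antitone hc.le
  ⟨hR, rseq_monotone_of_antitone hR⟩
end

section
/- Let c ∈ ℂ with |c| > 2, Q(z) = z² + c, D = {z : |z| ≤ |c|}. For every n ≥ 1 and every z ∈ Q^{-n}(D) (i.e., z with Q^k(z) ∈ D for all 0 ≤ k ≤ n), one has r_n ≤ |z| ≤ R_n, where R_1 = √(2|c|), R_{n+1} = √(|c| + R_n), r_1 = 0, r_{n+1} = √(|c| - R_n). -/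
/-!
The triangle inequality applied to `z² = (z² + c) - c` gives
`‖c‖ - ‖Q z‖ ≤ ‖z‖² ≤ ‖c‖ + ‖Q z‖`. Since `Q z ∈ Q^{-n}(D)`, induction bounds `‖Q z‖` by `R_n`,
and the two inequalities turn this into `r_{n+1} ≤ ‖z‖ ≤ R_{n+1}`; the base case uses
`‖Q z‖ ≤ ‖c‖` directly.
-/

section NormedDivisionRing

variable {𝕜 : Type*} [NormedDivisionRing 𝕜] {z c : 𝕜} {R : ℝ}

lemma norm_le_sqrt_norm_add (h : ‖z ^ 2 + c‖ ≤ R) : ‖z‖ ≤ Real.sqrt (‖c‖ + R) := by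
  have hsq : ‖z‖ ^ 2 ≤ ‖c‖ + R := calc
    ‖z‖ ^ 2 = ‖(z ^ 2 + c) - c‖ := by rw [add_sub_cancel_right, norm_pow]
    _ ≤ ‖z ^ 2 + c‖ + ‖c‖ := norm_sub_le _ _
    _ ≤ ‖c‖ + R := by linarith
  simpa only [abs_norm] using Real.abs_le_sqrt hsq

lemma sqrt_norm_sub_le_norm (h : ‖z ^ 2 + c‖ ≤ R) : Real.sqrt (‖c‖ - R) ≤ ‖z‖ := by
  have hsq : ‖c‖ - R ≤ ‖z‖ ^ 2 := calc
    ‖c‖ - R ≤ ‖c‖ - ‖z ^ 2 + c‖ := by linarith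
    _ ≤ ‖c - (z ^ 2 + c)‖ := norm_sub_norm_le _ _
    _ = ‖z‖ ^ 2 := by rw [sub_add_cancel_right, norm_neg, norm_pow]
  exact (Real.sqrt_le_sqrt hsq).trans_eq (Real.sqrt_sq (norm_nonneg z))

end NormedDivisionRing

theorem stmt_11_general (c : ℂ) (n : ℕ) (z : ℂ)
    (hz : ∀ k ≤ n + 1, ‖(fun w => w ^ 2 + c)^[k] z‖ ≤ ‖c‖) :
    rseq (‖c‖) n ≤ ‖z‖ ∧ ‖z‖ ≤ Rseq (‖c‖) n := by
  induction n generalizing z with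
  | zero =>
    refine ⟨norm_nonneg z, ?_⟩
    rw [Rseq, two_mul]
    exact norm_le_sqrt_norm_add (hz 1 le_rfl)
  | succ n ih =>
    have hQz : ‖z ^ 2 + c‖ ≤ Rseq (‖c‖) n :=
      (ih (z ^ 2 + c) fun k hk => by
        simpa only [Function.iterate_succ_apply] using hz (k + 1) (by omega)).2
    exact ⟨sqrt_norm_sub_le_norm hQz, norm_le_sqrt_norm_add hQz⟩

/-- `Rseq a n = R_{n+1}`, `rseq a n = r_{n+1}`; membership in `Q^{-(n+1)}(D)` means
`Q^k z ∈ D` for all `0 ≤ k ≤ n+1`. -/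
theorem stmt_11 (c : ℂ) (hc : 2 < ‖c‖) (n : ℕ) (z : ℂ)
    (hz : ∀ k ≤ n + 1, ‖(fun w => w ^ 2 + c)^[k] z‖ ≤ ‖c‖) :
    rseq (‖c‖) n ≤ ‖z‖ ∧ ‖z‖ ≤ Rseq (‖c‖) n :=
  stmt_11_general c n z hz
end

section
/- Let c ∈ ℂ with |c| > 3 + √3, Q(z) = z² + c, D = {z : |z| ≤ |c|}, and let J = ⋂_{n≥0} Q^{-n}(D) be the Julia set (the set of points whose entire forward orbit stays in D). Then the two-dimensional Lebesgue measure of the difference set J - J = {x - y : x, y ∈ J} is zero. -/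
/-!
For `z ∈ J` the whole orbit stays in the disc of radius `R = escapeRadius ‖c‖`, the positive
root of `R² = R + ‖c‖`, so `‖Qᵏ z‖² ≥ ‖c‖ - R > 2` (this is where `‖c‖ > 3 + √3` enters).
Since `Qᵏ⁺¹ z` stays in the disc `‖w‖ ≤ ‖c‖`, the point `Qᵏ z` satisfies `Re ((Qᵏ z)² c̄) ≤ 0`;
after multiplying by a square root `b` of `c̄` it lies in one of two opposite quarter-planes.
Two points in the same quarter-plane satisfy `‖w₁ + w₂‖² ≥ ‖w₁‖² + ‖w₂‖²`, so
`Q w₁ - Q w₂ = (w₁ - w₂)(w₁ + w₂)` expands their distance by `r = √(2 (‖c‖ - R)) > 2`.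
Hence points of `J` with the same `n`-step quarter-plane itinerary are `2‖c‖ / rⁿ`-close, and
`J - J` is covered by `4ⁿ` discs of radius `4‖c‖ / rⁿ`, of total area `O((4 / r²)ⁿ) → 0`.
-/

open MeasureTheory Filter Set Metric Topology
open scoped Pointwise ComplexConjugate

lemma le_of_sq_le_succ_add {a : ℕ → ℝ} {t M : ℝ} (hbdd : BddAbove (range a))
    (ha : ∀ k, a k ^ 2 ≤ a (k + 1) + t) (hM : M + t ≤ M ^ 2) (hM1 : 1 ≤ M) (k : ℕ) :
    a k ≤ M := by
  -- the supremum `S` of the sequence satisfies `S² ≤ S + t`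
  set S := ⨆ j, a j
  have hS : S ≤ √(S + t) := ciSup_le fun j ↦ (le_abs_self _).trans <|
    Real.abs_le_sqrt <| (ha j).trans <| by gcongr; exact le_ciSup hbdd _
  by_contra! h
  have hMS : M < S := h.trans_le (le_ciSup hbdd k)
  have hS2 : S ^ 2 ≤ S + t := (Real.le_sqrt' (by linarith)).mp hS
  nlinarith

noncomputable def escapeRadius (t : ℝ) : ℝ := (1 + √(1 + 4 * t)) / 2

section escapeRadius

variable {t : ℝ}

lemma escapeRadius_sq (ht : 0 ≤ t) : escapeRadius t ^ 2 = escapeRadius t + t := by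
  have := Real.sq_sqrt (show 0 ≤ 1 + 4 * t by linarith)
  unfold escapeRadius
  linear_combination this / 4

lemma one_le_escapeRadius (ht : 0 ≤ t) : 1 ≤ escapeRadius t := by
  have : 1 ≤ √(1 + 4 * t) := Real.one_le_sqrt.mpr (by linarith)
  unfold escapeRadius
  linarith

lemma escapeRadius_lt_sub_two (ht : 3 + √3 < t) : escapeRadius t < t - 2 := by
  have h3 : 0 < √3 := by positivity
  have : √(1 + 4 * t) < 2 * t - 5 := by
    rw [Real.sqrt_lt' (by linarith)]
    nlinarith [Real.sq_sqrt (show (0 : ℝ) ≤ 3 by norm_num)]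
  unfold escapeRadius
  linarith

end escapeRadius

lemma pow_mul_dist_le_dist_iterate {X : Type*} [PseudoMetricSpace X] {f : X → X} {r : ℝ}
    (hr : 0 ≤ r) {x y : X} {n : ℕ}
    (h : ∀ k < n, r * dist (f^[k] x) (f^[k] y) ≤ dist (f (f^[k] x)) (f (f^[k] y))) :
    r ^ n * dist x y ≤ dist (f^[n] x) (f^[n] y) := by
  induction n with
  | zero => simp
  | succ n ih =>
    rw [pow_succ', mul_assoc, Function.iterate_succ_apply', Function.iterate_succ_apply']
    calc r * (r ^ n * dist x y) ≤ r * dist (f^[n] x) (f^[n] y) :=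
          mul_le_mul_of_nonneg_left (ih fun k hk ↦ h k (by omega)) hr
      _ ≤ _ := h n n.lt_succ_self

lemma volume_sub_le_of_dist_le {A B : Set ℂ} {δ : ℝ} (hA : ∀ x ∈ A, ∀ y ∈ A, dist x y ≤ δ)
    (hB : ∀ x ∈ B, ∀ y ∈ B, dist x y ≤ δ) :
    volume (A - B) ≤ ENNReal.ofReal (Real.pi * (2 * δ) ^ 2) := by
  rcases A.eq_empty_or_nonempty with rfl | ⟨a, ha⟩
  · simp
  rcases B.eq_empty_or_nonempty with rfl | ⟨b, hb⟩
  · simp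
  have hδ : 0 ≤ δ := dist_self a ▸ hA a ha a ha
  have hsub : A - B ⊆ closedBall (a - b) (2 * δ) := by
    rintro _ ⟨x, hx, y, hy, rfl⟩
    rw [mem_closedBall, dist_eq_norm, sub_sub_sub_comm]
    linarith [norm_sub_le (x - a) (y - b), (dist_eq_norm x a).symm ▸ hA x hx a ha,
      (dist_eq_norm y b).symm ▸ hB y hy b hb]
  calc volume (A - B) ≤ volume (closedBall (a - b) (2 * δ)) := measure_mono hsub
    _ = _ := by
      rw [Complex.volume_closedBall, ← ENNReal.ofReal_pow (by positivity), mul_comm,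
        ENNReal.ofReal_mul Real.pi_pos.le, ← NNReal.coe_real_pi, ENNReal.ofReal_coe_nnreal]

lemma volume_sub_eq_zero_of_itinerary {α : Type*} [Fintype α] {X : Set ℂ} {C r : ℝ}
    (hr : Fintype.card α < r) (σ : ∀ n, ℂ → Fin n → α)
    (hσ : ∀ n, ∀ x ∈ X, ∀ y ∈ X, σ n x = σ n y → r ^ n * dist x y ≤ C) :
    volume (X - X) = 0 := by
  have hr0 : 0 < r := (Nat.cast_nonneg _).trans_lt hr
  set q := Fintype.card α / r
  have hbound : ∀ n, volume (X - X) ≤ ENNReal.ofReal (Real.pi * (2 * C) ^ 2 * (q ^ n) ^ 2) := by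
    intro n
    set P : (Fin n → α) → Set ℂ := fun s ↦ {x ∈ X | σ n x = s}
    have hP : ∀ s, ∀ x ∈ P s, ∀ y ∈ P s, dist x y ≤ C / r ^ n := fun s x hx y hy ↦ by
      rw [le_div_iff₀' (by positivity)]
      exact hσ n x hx.1 y hy.1 (hx.2.trans hy.2.symm)
    have hcover : X - X ⊆ ⋃ p : (Fin n → α) × (Fin n → α), P p.1 - P p.2 := by
      rintro _ ⟨x, hx, y, hy, rfl⟩
      exact mem_iUnion.mpr ⟨(σ n x, σ n y), sub_mem_sub ⟨hx, rfl⟩ ⟨hy, rfl⟩⟩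
    calc volume (X - X) ≤ ∑ p : (Fin n → α) × (Fin n → α), volume (P p.1 - P p.2) :=
          (measure_mono hcover).trans (measure_iUnion_fintype_le _ _)
      _ ≤ ∑ _p : (Fin n → α) × (Fin n → α), ENNReal.ofReal (Real.pi * (2 * (C / r ^ n)) ^ 2) :=
          Finset.sum_le_sum fun p _ ↦ volume_sub_le_of_dist_le (hP _) (hP _)
      _ = _ := by
        rw [Finset.sum_const, Finset.card_univ, nsmul_eq_mul, ← ENNReal.ofReal_natCast,
          ← ENNReal.ofReal_mul (Nat.cast_nonneg _)]
        congr 1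
        simp only [Fintype.card_prod, Fintype.card_fun, Fintype.card_fin, q]
        push_cast
        rw [div_pow]
        field_simp
  have hq0 : 0 ≤ q := by positivity
  have hq1 : q < 1 := (div_lt_one hr0).mpr hr
  have htend : Tendsto (fun n ↦ ENNReal.ofReal (Real.pi * (2 * C) ^ 2 * (q ^ n) ^ 2)) atTop
      (𝓝 0) := by
    simpa using ENNReal.tendsto_ofReal
      (((tendsto_pow_atTop_nhds_zero_of_lt_one hq0 hq1).pow 2).const_mul (Real.pi * (2 * C) ^ 2))
  exact nonpos_iff_eq_zero.mp (ge_of_tendsto' htend hbound)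

noncomputable def quadMap (c w : ℂ) : ℂ := w ^ 2 + c

lemma quadMap_sub_quadMap (c x y : ℂ) : quadMap c x - quadMap c y = (x - y) * (x + y) := by
  unfold quadMap
  ring

lemma sq_norm_le_norm_quadMap_add (c w : ℂ) : ‖w‖ ^ 2 ≤ ‖quadMap c w‖ + ‖c‖ := by
  simpa [quadMap, norm_pow] using norm_sub_le (quadMap c w) c

lemma norm_le_norm_quadMap_add_sq_norm (c w : ℂ) : ‖c‖ ≤ ‖quadMap c w‖ + ‖w‖ ^ 2 := by
  calc ‖c‖ = ‖quadMap c w - w ^ 2‖ := by rw [quadMap, add_sub_cancel_left]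
    _ ≤ ‖quadMap c w‖ + ‖w ^ 2‖ := norm_sub_le _ _
    _ = ‖quadMap c w‖ + ‖w‖ ^ 2 := by rw [norm_pow]

lemma re_mul_conj_nonpos_of_norm_add_le {x c : ℂ} (h : ‖x + c‖ ≤ ‖c‖) : (x * conj c).re ≤ 0 := by
  have := pow_le_pow_left₀ (norm_nonneg _) h 2
  rw [Complex.sq_norm, Complex.sq_norm, Complex.normSq_add] at this
  nlinarith [Complex.normSq_nonneg x]

/-- `Re (u²) ≤ 0` puts `u` in one of the quarter-planes `|Re u| ≤ ± Im u`, of opening angle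
`π / 2`. -/
lemma re_mul_conj_nonneg_of_re_sq_nonpos {u v : ℂ} (hu : (u ^ 2).re ≤ 0) (hv : (v ^ 2).re ≤ 0)
    (h : 0 ≤ u.im ↔ 0 ≤ v.im) : 0 ≤ (u * conj v).re := by
  simp only [sq, Complex.mul_re, Complex.conj_re, Complex.conj_im] at *
  have him : 0 ≤ u.im * v.im := by
    rcases le_total 0 u.im with hu' | hu'
    · exact mul_nonneg hu' (h.mp hu')
    · by_cases hv' : 0 ≤ v.im
      · nlinarith [h.mpr hv']
      · nlinarith
  have hre : (u.re * v.re) ^ 2 ≤ (u.im * v.im) ^ 2 := by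
    rw [mul_pow, mul_pow]
    exact mul_le_mul (by nlinarith) (by nlinarith) (sq_nonneg _) (sq_nonneg _)
  nlinarith [(abs_le_of_sq_le_sq' hre him).1]

lemma sq_norm_add_sq_norm_le_sq_norm_add {b w₁ w₂ : ℂ} (hb : b ≠ 0)
    (h₁ : ((w₁ * b) ^ 2).re ≤ 0) (h₂ : ((w₂ * b) ^ 2).re ≤ 0)
    (hside : 0 ≤ (w₁ * b).im ↔ 0 ≤ (w₂ * b).im) : ‖w₁‖ ^ 2 + ‖w₂‖ ^ 2 ≤ ‖w₁ + w₂‖ ^ 2 := by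
  have h := re_mul_conj_nonneg_of_re_sq_nonpos h₁ h₂ hside
  rw [map_mul, mul_mul_mul_comm, Complex.mul_conj, Complex.re_mul_ofReal,
    mul_nonneg_iff_of_pos_right (Complex.normSq_pos.mpr hb)] at h
  rw [Complex.sq_norm, Complex.sq_norm, Complex.sq_norm, Complex.normSq_add]
  linarith

section quadMap

variable {c b : ℂ}

lemma sqrt_mul_dist_le_dist_quadMap (hc : c ≠ 0) (hb : b ^ 2 = conj c) {d : ℝ} {w₁ w₂ : ℂ}
    (h₁ : ‖quadMap c w₁‖ ≤ ‖c‖) (h₂ : ‖quadMap c w₂‖ ≤ ‖c‖) (hd₁ : d ≤ ‖w₁‖ ^ 2)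
    (hd₂ : d ≤ ‖w₂‖ ^ 2) (hside : 0 ≤ (w₁ * b).im ↔ 0 ≤ (w₂ * b).im) :
    √(2 * d) * dist w₁ w₂ ≤ dist (quadMap c w₁) (quadMap c w₂) := by
  have hb0 : b ≠ 0 := by
    rintro rfl
    exact hc (by simpa using hb.symm)
  have hsector {w : ℂ} (hw : ‖quadMap c w‖ ≤ ‖c‖) : ((w * b) ^ 2).re ≤ 0 := by
    rw [mul_pow, hb]
    exact re_mul_conj_nonpos_of_norm_add_le hw
  have hsum : √(2 * d) ≤ ‖w₁ + w₂‖ := Real.sqrt_le_iff.mpr ⟨norm_nonneg _, by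
    linarith [sq_norm_add_sq_norm_le_sq_norm_add hb0 (hsector h₁) (hsector h₂) hside]⟩
  rw [dist_eq_norm, dist_eq_norm, quadMap_sub_quadMap, norm_mul, mul_comm]
  exact mul_le_mul_of_nonneg_left hsum (norm_nonneg _)

variable {z x y : ℂ}

lemma norm_quadMap_iterate_le_escapeRadius (hz : ∀ n, ‖(quadMap c)^[n] z‖ ≤ ‖c‖) (k : ℕ) :
    ‖(quadMap c)^[k] z‖ ≤ escapeRadius ‖c‖ := by
  refine le_of_sq_le_succ_add (a := fun n ↦ ‖(quadMap c)^[n] z‖) ⟨‖c‖, ?_⟩ (fun n ↦ ?_)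
    (escapeRadius_sq (norm_nonneg c)).ge (one_le_escapeRadius (norm_nonneg c)) k
  · rintro _ ⟨n, rfl⟩
    exact hz n
  · simpa only [Function.iterate_succ_apply'] using sq_norm_le_norm_quadMap_add c _

lemma sub_escapeRadius_le_sq_norm_quadMap_iterate (hz : ∀ n, ‖(quadMap c)^[n] z‖ ≤ ‖c‖)
    (k : ℕ) : ‖c‖ - escapeRadius ‖c‖ ≤ ‖(quadMap c)^[k] z‖ ^ 2 := by
  have h := norm_quadMap_iterate_le_escapeRadius hz (k + 1)
  rw [Function.iterate_succ_apply'] at h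
  linarith [norm_le_norm_quadMap_add_sq_norm c ((quadMap c)^[k] z)]

noncomputable def quadItinerary (c b : ℂ) (n : ℕ) (z : ℂ) : Fin n → Bool :=
  fun k ↦ decide (0 ≤ ((quadMap c)^[k] z * b).im)

lemma sqrt_pow_mul_dist_le_of_quadItinerary_eq (hc : c ≠ 0) (hb : b ^ 2 = conj c)
    (hx : ∀ n, ‖(quadMap c)^[n] x‖ ≤ ‖c‖) (hy : ∀ n, ‖(quadMap c)^[n] y‖ ≤ ‖c‖) {n : ℕ}
    (hxy : quadItinerary c b n x = quadItinerary c b n y) :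
    √(2 * (‖c‖ - escapeRadius ‖c‖)) ^ n * dist x y ≤ 2 * ‖c‖ := by
  have hstep : ∀ k < n,
      √(2 * (‖c‖ - escapeRadius ‖c‖)) * dist ((quadMap c)^[k] x) ((quadMap c)^[k] y) ≤
        dist (quadMap c ((quadMap c)^[k] x)) (quadMap c ((quadMap c)^[k] y)) := fun k hk ↦ by
    refine sqrt_mul_dist_le_dist_quadMap hc hb ?_ ?_
      (sub_escapeRadius_le_sq_norm_quadMap_iterate hx k)
      (sub_escapeRadius_le_sq_norm_quadMap_iterate hy k)
      (decide_eq_decide.mp (congrFun hxy ⟨k, hk⟩))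
    · simpa only [Function.iterate_succ_apply'] using hx (k + 1)
    · simpa only [Function.iterate_succ_apply'] using hy (k + 1)
  calc _ ≤ dist ((quadMap c)^[n] x) ((quadMap c)^[n] y) :=
        pow_mul_dist_le_dist_iterate (Real.sqrt_nonneg _) hstep
    _ ≤ ‖(quadMap c)^[n] x‖ + ‖(quadMap c)^[n] y‖ := dist_le_norm_add_norm _ _
    _ ≤ 2 * ‖c‖ := by linarith [hx n, hy n]

end quadMap

theorem stmt_15 (c : ℂ) (hc : 3 + Real.sqrt 3 < ‖c‖)
    (J : Set ℂ)
    (hJ : J = {z : ℂ | ∀ n : ℕ,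
      ‖(fun w => w ^ 2 + c)^[n] z‖ ≤ ‖c‖}) :
    volume (J - J) = 0 := by
  subst hJ
  have hc0 : c ≠ 0 := norm_pos_iff.mp (by linarith [Real.sqrt_nonneg 3])
  obtain ⟨b, hb⟩ := IsAlgClosed.exists_pow_nat_eq (conj c) two_pos
  have hr : (Fintype.card Bool : ℝ) < √(2 * (‖c‖ - escapeRadius ‖c‖)) := by
    rw [Fintype.card_bool, Nat.cast_ofNat, Real.lt_sqrt zero_le_two]
    linarith [escapeRadius_lt_sub_two hc]
  exact volume_sub_eq_zero_of_itinerary hr (quadItinerary c b) fun n x hx y hy ↦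
    sqrt_pow_mul_dist_le_of_quadItinerary_eq hc0 hb hx hy
end
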